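/- Let F be the Kripke frame with exactly three worlds x0, x1, y and accessibility relation R = {(x0,x0),(x1,x1),(y,y),(x0,x1),(x1,x0),(x0,y),(x1,y)} (a two-element cluster {x0,x1} below a final world y). For every modal formula φ with v⁺(φ)⊆{p} and v⁻(φ)=∅ (p a fixed propositional variable), there exists a formula ψ among ⊥, □p, p∧□◇p, □◇p, p, p∨□◇p, ◇p, ⊤ such that φ↔ψ is satisfied at every world of every Kripke model based on F. -/

import Mathlib

/-- Modal formulas over countably many variables. -/
inductive ModalForm : Type where
  | var : ℕ → ModalForm
  | bot : ModalForm
  | and : ModalForm → ModalForm → ModalForm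
  | or : ModalForm → ModalForm → ModalForm
  | not : ModalForm → ModalForm
  | imp : ModalForm → ModalForm → ModalForm
  | box : ModalForm → ModalForm

namespace ModalForm

mutual
  /-- positively occurring variables -/
  def vpos : ModalForm → Finset ℕ
    | var p => {p}
    | bot => ∅
    | and φ ψ => vpos φ ∪ vpos ψ
    | or φ ψ => vpos φ ∪ vpos ψ
    | not φ => vneg φ
    | imp φ ψ => vneg φ ∪ vpos ψ
    | box φ => vpos φ
  /-- negatively occurring variables -/
  def vneg : ModalForm → Finset ℕ
    | var _ => ∅
    | bot => ∅
    | and φ ψ => vneg φ ∪ vneg ψ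
    | or φ ψ => vneg φ ∪ vneg ψ
    | not φ => vpos φ
    | imp φ ψ => vpos φ ∪ vneg ψ
    | box φ => vneg φ
end

/-- Modal depth: maximal nesting of `□`. -/
def depth : ModalForm → ℕ
  | var _ => 0
  | bot => 0
  | and φ ψ => max (depth φ) (depth ψ)
  | or φ ψ => max (depth φ) (depth ψ)
  | not φ => depth φ
  | imp φ ψ => max (depth φ) (depth ψ)
  | box φ => depth φ + 1

/-- `◇φ := ¬□¬φ` -/
def dia (φ : ModalForm) : ModalForm := not (box (not φ))

/-- `⊤ := ¬⊥` -/
def top : ModalForm := not bot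

end ModalForm

/-- An S4 Kripke frame: nonempty set of worlds with a reflexive transitive relation. -/
structure KFrame : Type 1 where
  W : Type
  R : W → W → Prop
  nonempty : Nonempty W
  refl : ∀ x, R x x
  trans : ∀ x y z, R x y → R y z → R x z

/-- A Kripke model: a frame with a valuation. -/
structure KModel : Type 1 extends KFrame where
  val : W → ℕ → Prop

/-- The model based on frame `F` with valuation `V`. -/
def KFrame.toModel (F : KFrame) (V : F.W → ℕ → Prop) : KModel :=
  { toKFrame := F, val := V }

/-- Satisfaction in a Kripke model. -/
def KModel.Sat (M : KModel) : M.W → ModalForm → Prop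
  | w, .var p => M.val w p
  | _, .bot => False
  | w, .and φ ψ => M.Sat w φ ∧ M.Sat w ψ
  | w, .or φ ψ => M.Sat w φ ∨ M.Sat w ψ
  | w, .not φ => ¬ M.Sat w φ
  | w, .imp φ ψ => M.Sat w φ → M.Sat w ψ
  | w, .box φ => ∀ y, M.R w y → M.Sat y φ

/-- `(M0,w0) →ₙ^{(P⁺,P⁻)} (M1,w1)`: every `(P⁺,P⁻)`-formula of depth ≤ n
satisfied at `(M0,w0)` is satisfied at `(M1,w1)`. -/
def ModalArrow (Pp Pm : Finset ℕ) (n : ℕ) (M0 : KModel) (w0 : M0.W)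
    (M1 : KModel) (w1 : M1.W) : Prop :=
  ∀ φ : ModalForm, φ.vpos ⊆ Pp → φ.vneg ⊆ Pm → φ.depth ≤ n →
    M0.Sat w0 φ → M1.Sat w1 φ

/-- p-morphism between frames. -/
def PMorphism (F G : KFrame) (f : F.W → G.W) : Prop :=
  (∀ x y, F.R x y → G.R (f x) (f y)) ∧
  (∀ x w, G.R (f x) w → ∃ z, F.R x z ∧ f z = w)

/-- The class `C` of Kripke models enjoys `n`-IP. -/
def EnjoysIP (C : Set KModel) (n : ℕ) : Prop :=
  ∀ (Pp Pm : Finset ℕ) (M0 M1 : KModel), M0 ∈ C → M1 ∈ C →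
    ∀ (w0 : M0.W) (w1 : M1.W), ModalArrow Pp Pm n M0 w0 M1 w1 →
      ∃ (F : KFrame) (wstar : F.W) (f0 : F.W → M0.W) (f1 : F.W → M1.W),
        (∀ V : F.W → ℕ → Prop, F.toModel V ∈ C) ∧
        PMorphism F M0.toKFrame f0 ∧
        PMorphism F M1.toKFrame f1 ∧
        f0 wstar = w0 ∧ f1 wstar = w1 ∧
        ∀ x : F.W, ModalArrow Pp Pm 0 M0 (f0 x) M1 (f1 x)

/-- A world is final iff every successor is also a predecessor. -/
def KModel.Final (M : KModel) (w : M.W) : Prop := ∀ y, M.R w y → M.R y w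

/-- The cluster of a world. -/
def KModel.cluster (M : KModel) (w : M.W) : Set M.W := {u | M.R w u ∧ M.R u w}

/-- Cluster `C0` of `M0` matches cluster `C1` of `M1`. -/
def Matches (Pp Pm : Finset ℕ) (M0 M1 : KModel) (C0 : Set M0.W) (C1 : Set M1.W) : Prop :=
  (∀ u0 ∈ C0, ∃ u1 ∈ C1, ModalArrow Pp Pm 0 M0 u0 M1 u1) ∧
  (∀ u1 ∈ C1, ∃ u0 ∈ C0, ModalArrow Pp Pm 0 M0 u0 M1 u1)

/-- `φ` is satisfied at every world of every model in `C`. -/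
def ValidOn (C : Set KModel) (φ : ModalForm) : Prop :=
  ∀ M ∈ C, ∀ w : M.W, M.Sat w φ

/-- The frame of Γ(LS,1,2): a two-element cluster `{0,1}` below a final world `2`. -/
def LS12Frame : KFrame where
  W := Fin 3
  R := fun a b => a = b ∨ a.val ≤ 1
  nonempty := ⟨0⟩
  refl := fun _ => Or.inl rfl
  trans := fun x y z hxy hyz => by
    rcases hxy with rfl | h
    · exact hyz
    · exact Or.inr h


/-!
A formula in the single variable `p` is evaluated on the three-world frame by a Boolean truth
function of the valuation of `p`, and there are only finitely many such functions. The truth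
functions of the eight listed formulas contain those of `⊥`, `⊤` and `p` and are closed under
`⊓`, `⊔`, `□` and `◇` (a finite check). Since `vneg φ = ∅` and `vpos φ ⊆ {p}`, induction on `φ`,
tracking the complements of the truth functions of negative subformulas (De Morgan), shows that
the truth function of `φ` is one of the eight.
-/

namespace KFrame

section TruthFn

variable (F : KFrame) [Fintype F.W] [DecidableRel F.R]

abbrev TruthFn : Type := (F.W → Bool) → F.W → Bool

def boxFn (f : F.TruthFn) : F.TruthFn := fun v w => decide (∀ u, F.R w u → f v u = true)

/-- All variables are read as one and the same variable, whose valuation is the argument. -/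
def truthFn : ModalForm → F.TruthFn
  | .var _ => fun v => v
  | .bot => ⊥
  | .and φ ψ => truthFn φ ⊓ truthFn ψ
  | .or φ ψ => truthFn φ ⊔ truthFn ψ
  | .not φ => (truthFn φ)ᶜ
  | .imp φ ψ => (truthFn φ)ᶜ ⊔ truthFn ψ
  | .box φ => F.boxFn (truthFn φ)

theorem sat_toModel_iff_truthFn (v : F.W → Bool) (φ : ModalForm) (w : F.W) :
    (F.toModel fun u _ => v u = true).Sat w φ ↔ F.truthFn φ v w = true := by
  induction φ generalizing w with
  | var => rfl
  | bot => simp [KModel.Sat, truthFn]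
  | and φ ψ ihφ ihψ => simp [KModel.Sat, truthFn, ihφ, ihψ]
  | or φ ψ ihφ ihψ => simp [KModel.Sat, truthFn, ihφ, ihψ]
  | not φ ih => simp [KModel.Sat, truthFn, ih]
  | imp φ ψ ihφ ihψ => simp [KModel.Sat, truthFn, ihφ, ihψ, imp_iff_not_or]
  | box φ ih =>
    simp only [truthFn, boxFn, decide_eq_true_iff]
    exact forall_congr' fun u => imp_congr_right fun _ => ih u

end TruthFn

theorem sat_toModel_congr {F : KFrame} {V V' : F.W → ℕ → Prop} {φ : ModalForm}
    (hpos : ∀ q ∈ φ.vpos, ∀ u, V u q ↔ V' u q) (hneg : ∀ q ∈ φ.vneg, ∀ u, V u q ↔ V' u q)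
    (w : F.W) : (F.toModel V).Sat w φ ↔ (F.toModel V').Sat w φ := by
  induction φ generalizing w with
  | var q => exact hpos q (Finset.mem_singleton_self q) w
  | bot => rfl
  | and φ ψ ihφ ihψ =>
    simp only [ModalForm.vpos, ModalForm.vneg, Finset.forall_mem_union] at hpos hneg
    exact and_congr (ihφ hpos.1 hneg.1 w) (ihψ hpos.2 hneg.2 w)
  | or φ ψ ihφ ihψ =>
    simp only [ModalForm.vpos, ModalForm.vneg, Finset.forall_mem_union] at hpos hneg
    exact or_congr (ihφ hpos.1 hneg.1 w) (ihψ hpos.2 hneg.2 w)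
  | not φ ih =>
    simp only [ModalForm.vpos, ModalForm.vneg] at hpos hneg
    exact not_congr (ih hneg hpos w)
  | imp φ ψ ihφ ihψ =>
    simp only [ModalForm.vpos, ModalForm.vneg, Finset.forall_mem_union] at hpos hneg
    exact imp_congr (ihφ hneg.1 hpos.1 w) (ihψ hpos.2 hneg.2 w)
  | box φ ih =>
    simp only [ModalForm.vpos, ModalForm.vneg] at hpos hneg
    exact forall_congr' fun u => imp_congr_right fun _ => ih hpos hneg u

theorem sat_toModel_iff_truthFn_of_subset_singleton (F : KFrame) [Fintype F.W]
    [DecidableRel F.R] {V : F.W → ℕ → Prop} {p : ℕ} {v : F.W → Bool}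
    (hv : ∀ u, v u = true ↔ V u p) {φ : ModalForm} (hpos : φ.vpos ⊆ {p}) (hneg : φ.vneg ⊆ {p})
    (w : F.W) : (F.toModel V).Sat w φ ↔ F.truthFn φ v w = true := by
  have hagree : ∀ q ∈ ({p} : Finset ℕ), ∀ u, V u q ↔ v u = true := by
    rintro q hq u
    rw [Finset.mem_singleton.1 hq, hv]
  rw [← sat_toModel_iff_truthFn]
  exact sat_toModel_congr (fun q hq => hagree q (hpos hq)) (fun q hq => hagree q (hneg hq)) w

end KFrame

namespace LS12Frame

instance : Fintype LS12Frame.W := Fin.fintype 3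

instance : DecidableRel LS12Frame.R := fun (a b : Fin 3) =>
  inferInstanceAs (Decidable (a = b ∨ a.val ≤ 1))

def valuation (a b c : Bool) : LS12Frame.W → Bool := ![a, b, c]

def table (f : LS12Frame.TruthFn) : Bool → Bool → Bool → Fin 3 → Bool :=
  fun a b c => f (valuation a b c)

theorem table_injective : Function.Injective table := by
  intro f g h
  funext v
  have hv : v = valuation (v (0 : Fin 3)) (v (1 : Fin 3)) (v (2 : Fin 3)) := by
    funext u; fin_cases u <;> rfl
  rw [hv]
  exact congrFun (congrFun (congrFun h _) _) _

/-- The generic instance on function types enumerates `LS12Frame.W → Bool` as a `Fintype`,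
which is far too slow for `decide`. -/
instance : DecidableEq LS12Frame.TruthFn := fun f g =>
  decidable_of_iff (table f = table g) table_injective.eq_iff

end LS12Frame

def candidates (p : ℕ) : List ModalForm :=
  [ModalForm.bot,
   ModalForm.box (ModalForm.var p),
   ModalForm.and (ModalForm.var p) (ModalForm.box (ModalForm.dia (ModalForm.var p))),
   ModalForm.box (ModalForm.dia (ModalForm.var p)),
   ModalForm.var p,
   ModalForm.or (ModalForm.var p) (ModalForm.box (ModalForm.dia (ModalForm.var p))),
   ModalForm.dia (ModalForm.var p),
   ModalForm.top]

theorem vpos_vneg_subset_of_mem_candidates {p : ℕ} {ψ : ModalForm} (hψ : ψ ∈ candidates p) :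
    ψ.vpos ⊆ {p} ∧ ψ.vneg ⊆ {p} := by
  simp only [candidates, List.mem_cons, List.not_mem_nil, or_false] at hψ
  rcases hψ with rfl | rfl | rfl | rfl | rfl | rfl | rfl | rfl <;>
    simp [ModalForm.vpos, ModalForm.vneg, ModalForm.dia, ModalForm.top]

def posFns : List LS12Frame.TruthFn := (candidates 0).map LS12Frame.truthFn

theorem map_truthFn_candidates (p : ℕ) : (candidates p).map LS12Frame.truthFn = posFns := rfl

-- `decide` would pick the `Fintype` instance of `LS12Frame.TruthFn` for `∀ f ∈ posFns`;
-- quantifying over the list of candidates avoids it.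
theorem inf_mem_posFns : ∀ f ∈ posFns, ∀ g ∈ posFns, f ⊓ g ∈ posFns := by
  simp only [posFns, List.forall_mem_map]; decide

theorem sup_mem_posFns : ∀ f ∈ posFns, ∀ g ∈ posFns, f ⊔ g ∈ posFns := by
  simp only [posFns, List.forall_mem_map]; decide

theorem boxFn_mem_posFns : ∀ f ∈ posFns, LS12Frame.boxFn f ∈ posFns := by
  simp only [posFns, List.forall_mem_map]; decide

theorem compl_boxFn_compl_mem_posFns : ∀ f ∈ posFns, (LS12Frame.boxFn fᶜ)ᶜ ∈ posFns := by
  simp only [posFns, List.forall_mem_map]; decide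

theorem truthFn_mem_posFns (p : ℕ) (φ : ModalForm) :
    (φ.vpos ⊆ {p} → φ.vneg = ∅ → LS12Frame.truthFn φ ∈ posFns) ∧
    (φ.vpos = ∅ → φ.vneg ⊆ {p} → (LS12Frame.truthFn φ)ᶜ ∈ posFns) := by
  induction φ with
  | var q =>
    refine ⟨fun _ _ => ?_, fun h _ => absurd h (Finset.singleton_ne_empty q)⟩
    change LS12Frame.truthFn (.var 0) ∈ posFns
    decide
  | bot => exact ⟨fun _ _ => by decide, fun _ _ => by decide⟩
  | and φ ψ ihφ ihψ =>
    simp only [ModalForm.vpos, ModalForm.vneg, Finset.union_subset_iff, Finset.union_eq_empty,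
      KFrame.truthFn, compl_inf]
    exact ⟨fun hp hn => inf_mem_posFns _ (ihφ.1 hp.1 hn.1) _ (ihψ.1 hp.2 hn.2),
      fun hp hn => sup_mem_posFns _ (ihφ.2 hp.1 hn.1) _ (ihψ.2 hp.2 hn.2)⟩
  | or φ ψ ihφ ihψ =>
    simp only [ModalForm.vpos, ModalForm.vneg, Finset.union_subset_iff, Finset.union_eq_empty,
      KFrame.truthFn, compl_sup]
    exact ⟨fun hp hn => sup_mem_posFns _ (ihφ.1 hp.1 hn.1) _ (ihψ.1 hp.2 hn.2),
      fun hp hn => inf_mem_posFns _ (ihφ.2 hp.1 hn.1) _ (ihψ.2 hp.2 hn.2)⟩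
  | not φ ih =>
    simp only [ModalForm.vpos, ModalForm.vneg, KFrame.truthFn, compl_compl]
    exact ⟨fun hp hn => ih.2 hn hp, fun hp hn => ih.1 hn hp⟩
  | imp φ ψ ihφ ihψ =>
    simp only [ModalForm.vpos, ModalForm.vneg, Finset.union_subset_iff, Finset.union_eq_empty,
      KFrame.truthFn, compl_sup, compl_compl]
    exact ⟨fun hp hn => sup_mem_posFns _ (ihφ.2 hn.1 hp.1) _ (ihψ.1 hp.2 hn.2),
      fun hp hn => inf_mem_posFns _ (ihφ.1 hn.1 hp.1) _ (ihψ.2 hp.2 hn.2)⟩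
  | box φ ih =>
    simp only [ModalForm.vpos, ModalForm.vneg, KFrame.truthFn]
    refine ⟨fun hp hn => boxFn_mem_posFns _ (ih.1 hp hn), fun hp hn => ?_⟩
    simpa only [compl_compl] using compl_boxFn_compl_mem_posFns _ (ih.2 hp hn)

theorem stmt18 (p : ℕ) (φ : ModalForm)
    (hpos : φ.vpos ⊆ {p}) (hneg : φ.vneg = ∅) :
    ∃ ψ ∈ ([ModalForm.bot,
            ModalForm.box (ModalForm.var p),
            ModalForm.and (ModalForm.var p) (ModalForm.box (ModalForm.dia (ModalForm.var p))),
            ModalForm.box (ModalForm.dia (ModalForm.var p)),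
            ModalForm.var p,
            ModalForm.or (ModalForm.var p) (ModalForm.box (ModalForm.dia (ModalForm.var p))),
            ModalForm.dia (ModalForm.var p),
            ModalForm.top] : List ModalForm),
      ∀ (V : LS12Frame.W → ℕ → Prop) (w : LS12Frame.W),
        (LS12Frame.toModel V).Sat w (ModalForm.and (φ.imp ψ) (ψ.imp φ)) := by
  classical
  have hφ := (truthFn_mem_posFns p φ).1 hpos hneg
  rw [← map_truthFn_candidates p] at hφ
  obtain ⟨ψ, hψ, hψφ⟩ := List.mem_map.1 hφ
  refine ⟨ψ, hψ, fun V w => ?_⟩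
  have hv : ∀ u, decide (V u p) = true ↔ V u p := fun _ => decide_eq_true_iff
  have hψp := vpos_vneg_subset_of_mem_candidates hψ
  have hiff : (LS12Frame.toModel V).Sat w φ ↔ (LS12Frame.toModel V).Sat w ψ := by
    rw [KFrame.sat_toModel_iff_truthFn_of_subset_singleton _ hv hpos (by simp [hneg]),
      KFrame.sat_toModel_iff_truthFn_of_subset_singleton _ hv hψp.1 hψp.2, hψφ]
  exact ⟨hiff.1, hiff.2⟩
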